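/- arXiv:2403.07854 — 2 statements merged into one kernel-verified Lean document; each statement's English description precedes it below -/
import Mathlib

section
/- With full-rank data X_f = U Σ Vᵀ (SVD with d nonzero singular values σ_1 ≥ … ≥ σ_d > 0), labels y_f = X_fᵀθ* + η_f with η_f mean-zero noise independent of X_f, and self-distillation with teacher trained on the same data (f_t = f), the expected estimation error of the student satisfies ‖E_η[θ̂_s(α,f,f) − θ*]‖² = Σ_{i=1}^d ⟨θ*, u_i⟩² (λ/(σ_i² + λ))² (1 + α σ_i²/(σ_i² + λ))². -/
/-!
Write `φ v = U * diagonal v * Uᵀ`; for orthogonal `U` this is an algebra homomorphism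
`(Fin d → ℝ) →ₐ[ℝ] Matrix`. The SVD gives `X Xᵀ = φ (σ²)`, hence `A = φ (σ² + λ)` and
`A⁻¹ = φ (σ² + λ)⁻¹`, so the ridge hat matrix is `H = A⁻¹ X Xᵀ = φ r` with `r = σ²/(σ² + λ)`.
Since the noise is centred and the student is linear in the labels, its mean is
`((1 - α) H + α H²) θ*`. The bias is `φ ((1 - α) r + α r² - 1) θ*`, and as `U` is orthogonal its
squared norm is the sum of the squares of its coordinates `-(λ/(σ² + λ)) (1 + α r) ⟨θ*, u_i⟩`.
-/

open Matrix MeasureTheory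

namespace Matrix

section Orthogonal

variable {n R : Type*} [Fintype n] [DecidableEq n] [CommRing R]

def conjDiagonalAlgHom (U : Matrix n n R) (hU : Uᵀ * U = 1) : (n → R) →ₐ[R] Matrix n n R where
  toFun v := U * diagonal v * Uᵀ
  map_one' := by rw [diagonal_one', Matrix.mul_one, mul_eq_one_comm.mp hU]
  map_mul' v w := by
    simp only [Matrix.mul_assoc]
    rw [← Matrix.mul_assoc Uᵀ, hU, Matrix.one_mul, ← Matrix.mul_assoc (diagonal v),
      diagonal_mul_diagonal']
    rfl
  map_zero' := by rw [diagonal_zero', Matrix.mul_zero, Matrix.zero_mul]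
  map_add' v w := by
    rw [← Matrix.add_mul, ← Matrix.mul_add, diagonal_add]
    rfl
  commutes' c := by
    rw [← algebraMap_eq_diagonal, Algebra.algebraMap_eq_smul_one, Matrix.mul_smul,
      Matrix.mul_one, Matrix.smul_mul, mul_eq_one_comm.mp hU]

@[simp]
theorem conjDiagonalAlgHom_apply (U : Matrix n n R) (hU : Uᵀ * U = 1) (v : n → R) :
    conjDiagonalAlgHom U hU v = U * diagonal v * Uᵀ :=
  rfl

theorem conjDiagonalAlgHom_inv {K : Type*} [Field K] {U : Matrix n n K} (hU : Uᵀ * U = 1)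
    {v : n → K} (hv : ∀ i, v i ≠ 0) :
    (conjDiagonalAlgHom U hU v)⁻¹ = conjDiagonalAlgHom U hU v⁻¹ := by
  refine inv_eq_left_inv ?_
  rw [← map_mul, ← map_one (conjDiagonalAlgHom U hU)]
  congr 1
  exact funext fun i => inv_mul_cancel₀ (hv i)

theorem dotProduct_self_mulVec_of_transpose_mul_self {U : Matrix n n R} (hU : Uᵀ * U = 1)
    (v : n → R) : U *ᵥ v ⬝ᵥ U *ᵥ v = v ⬝ᵥ v := by
  rw [dotProduct_mulVec, vecMul_mulVec, hU, vecMul_one]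

theorem sum_sq_conjDiagonalAlgHom_mulVec {U : Matrix n n R} (hU : Uᵀ * U = 1) (g v : n → R) :
    ∑ j, (conjDiagonalAlgHom U hU g *ᵥ v) j ^ 2 = ∑ i, (g i * (v ᵥ* U) i) ^ 2 := by
  have hfactor : conjDiagonalAlgHom U hU g *ᵥ v = U *ᵥ (g * v ᵥ* U) := by
    rw [conjDiagonalAlgHom_apply, ← mulVec_mulVec, ← mulVec_mulVec, mulVec_transpose]
    exact congrArg _ (funext (mulVec_diagonal g _))
  rw [hfactor]
  simpa only [dotProduct, sq, Pi.mul_apply] using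
    dotProduct_self_mulVec_of_transpose_mul_self hU (g * v ᵥ* U)

end Orthogonal

theorem svd_mul_transpose {m n k R : Type*} [Fintype n] [Fintype k] [DecidableEq k] [CommRing R]
    (U : Matrix m k R) (σ : k → R) {V : Matrix n k R} (hV : Vᵀ * V = 1) :
    U * diagonal σ * Vᵀ * (U * diagonal σ * Vᵀ)ᵀ = U * diagonal (σ ^ 2) * Uᵀ := by
  simp only [transpose_mul, transpose_transpose, diagonal_transpose, Matrix.mul_assoc]
  rw [← Matrix.mul_assoc Vᵀ, hV, Matrix.one_mul, ← Matrix.mul_assoc (diagonal σ),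
    diagonal_mul_diagonal', sq]
  rfl

end Matrix

section SelfDistillation

variable {m n R : Type*} [Fintype m] [Fintype n] [CommRing R]

-- With the ridge matrix `K = (X Xᵀ + λ I)⁻¹ X`, the student is `θ̂_s = selfDistillMatrix K X α *ᵥ y`.
def selfDistillMatrix (K : Matrix m n R) (X : Matrix m n R) (α : R) : Matrix m n R :=
  (1 - α) • K + α • (K * Xᵀ * K)

theorem mulVec_mulVec_selfDistill (B : Matrix m m R) (X : Matrix m n R) (α : R) (y : n → R) :
    B *ᵥ (X *ᵥ ((1 - α) • y + α • (Xᵀ *ᵥ (B *ᵥ (X *ᵥ y))))) =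
      selfDistillMatrix (B * X) X α *ᵥ y := by
  simp only [selfDistillMatrix, mulVec_add, mulVec_smul, add_mulVec, smul_mulVec, mulVec_mulVec,
    Matrix.mul_assoc]

theorem selfDistillMatrix_mul_transpose (K X : Matrix m n R) (α : R) :
    selfDistillMatrix K X α * Xᵀ = (1 - α) • (K * Xᵀ) + α • (K * Xᵀ * (K * Xᵀ)) := by
  simp only [selfDistillMatrix, Matrix.add_mul, Matrix.smul_mul, Matrix.mul_assoc]

end SelfDistillation

theorem integral_mulVec_add_of_integral_eq_zero {Ω m n : Type*} [MeasurableSpace Ω]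
    {μ : Measure Ω} [IsProbabilityMeasure μ] [Fintype n] (M : Matrix m n ℝ) (c : n → ℝ) {η : Ω → n → ℝ}
    (hint : ∀ i, Integrable (fun ω => η ω i) μ) (hmean : ∀ i, ∫ ω, η ω i ∂μ = 0) (j : m) :
    ∫ ω, (M *ᵥ (c + η ω)) j ∂μ = (M *ᵥ c) j := by
  have hsplit : ∀ ω, (M *ᵥ (c + η ω)) j = (M *ᵥ c) j + ∑ i, M j i * η ω i := fun ω => by
    rw [mulVec_add, Pi.add_apply]; rfl
  have hint' : ∀ i ∈ Finset.univ, Integrable (fun ω => M j i * η ω i) μ :=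
    fun i _ => (hint i).const_mul _
  simp only [hsplit, integral_add (integrable_const _) (integrable_finsetSum _ hint'),
    integral_finsetSum _ hint', integral_const_mul, hmean, mul_zero, Finset.sum_const_zero,
    add_zero, integral_const, probReal_univ, one_smul]

theorem selfDistill_bias_factor_sq {s lam α : ℝ} (h : s + lam ≠ 0) :
    ((1 - α) * ((s + lam)⁻¹ * s) + α * ((s + lam)⁻¹ * s * ((s + lam)⁻¹ * s)) - 1) ^ 2
      = (lam / (s + lam)) ^ 2 * (1 + α * s / (s + lam)) ^ 2 := by
  field_simp
  ring

theorem stmt6_general {d Nf : ℕ}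
    {Ω : Type*} [MeasurableSpace Ω] (μ : Measure Ω) [IsProbabilityMeasure μ]
    (η : Ω → Fin Nf → ℝ)
    (hint : ∀ i, Integrable (fun ω => η ω i) μ)
    (hmean : ∀ i, (∫ ω, η ω i ∂μ) = 0)
    (Xf : Matrix (Fin d) (Fin Nf) ℝ)
    (U : Matrix (Fin d) (Fin d) ℝ) (hU : Uᵀ * U = 1)
    (V : Matrix (Fin Nf) (Fin d) ℝ) (hV : Vᵀ * V = 1)
    (σ : Fin d → ℝ)
    (hSVD : Xf = U * Matrix.diagonal σ * Vᵀ)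
    (lam α : ℝ) (hlam : 0 < lam)
    (θstar : Fin d → ℝ)
    (A : Matrix (Fin d) (Fin d) ℝ)
    (hA : A = Xf * Xfᵀ + lam • (1 : Matrix (Fin d) (Fin d) ℝ))
    (student : Ω → Fin d → ℝ)
    (hstudent : student = fun ω =>
      A⁻¹ *ᵥ (Xf *ᵥ ((1 - α) • (Xfᵀ *ᵥ θstar + η ω)
        + α • (Xfᵀ *ᵥ (A⁻¹ *ᵥ (Xf *ᵥ (Xfᵀ *ᵥ θstar + η ω))))))) :
    (∑ j, ((∫ ω, student ω j ∂μ) - θstar j) ^ 2)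
      = ∑ i, (∑ j, θstar j * U j i) ^ 2 * (lam / (σ i ^ 2 + lam)) ^ 2
          * (1 + α * σ i ^ 2 / (σ i ^ 2 + lam)) ^ 2 := by
  set φ := conjDiagonalAlgHom U hU
  set w : Fin d → ℝ := σ ^ 2 + algebraMap ℝ (Fin d → ℝ) lam
  have hw : ∀ i, w i ≠ 0 := fun i =>
    (add_pos_of_nonneg_of_pos (sq_nonneg (σ i)) hlam).ne'
  have hXX : Xf * Xfᵀ = φ (σ ^ 2) := hSVD ▸ svd_mul_transpose U σ hV
  have hAinv : A⁻¹ = φ w⁻¹ := by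
    rw [hA, hXX, ← Algebra.algebraMap_eq_smul_one, ← AlgHom.commutes φ, ← map_add,
      conjDiagonalAlgHom_inv hU hw]
  set r := w⁻¹ * σ ^ 2
  set g := (1 - α) • r + α • (r * r) - 1
  set M := selfDistillMatrix (A⁻¹ * Xf) Xf α
  have hH : A⁻¹ * (Xf * Xfᵀ) = φ r := by rw [hAinv, hXX, ← map_mul]
  have hbias : M * Xfᵀ - 1 = φ g := by
    rw [selfDistillMatrix_mul_transpose, Matrix.mul_assoc, hH]
    simp only [g, map_sub, map_add, map_smul, map_mul, map_one]
  have hexpect : ∀ j, ∫ ω, student ω j ∂μ - θstar j = (φ g *ᵥ θstar) j := fun j => by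
    simp only [hstudent, mulVec_mulVec_selfDistill]
    rw [integral_mulVec_add_of_integral_eq_zero M _ hint hmean, ← hbias, sub_mulVec,
      mulVec_mulVec, one_mulVec, Pi.sub_apply]
  simp only [hexpect]
  rw [sum_sq_conjDiagonalAlgHom_mulVec]
  refine Finset.sum_congr rfl fun i _ => ?_
  have hwi : σ i ^ 2 + lam ≠ 0 := hw i
  simp only [g, r, w, Pi.sub_apply, Pi.add_apply, Pi.smul_apply, Pi.mul_apply, Pi.inv_apply,
    Pi.pow_apply, Pi.one_apply, Pi.algebraMap_apply, Algebra.algebraMap_self, RingHom.id_apply,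
    smul_eq_mul]
  rw [mul_pow, selfDistill_bias_factor_sq hwi, mul_comm, ← mul_assoc]
  rfl

/-- With full-rank `X_f = U Σ Vᵀ` (SVD with `d` nonzero singular values `σ_i > 0`),
labels `y_f = X_fᵀθ* + η_f` with mean-zero noise `η_f`, and self-distillation with a
teacher trained on the same data (`f_t = f`), the expected estimation error of the
student satisfies
`‖E_η[θ̂_s(α,f,f) − θ*]‖² = Σ_i ⟨θ*,u_i⟩² (λ/(σ_i²+λ))² (1 + ασ_i²/(σ_i²+λ))²`. -/
theorem stmt6 {d Nf : ℕ} (hd : d ≤ Nf)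
    {Ω : Type*} [MeasurableSpace Ω] (μ : Measure Ω) [IsProbabilityMeasure μ]
    (η : Ω → Fin Nf → ℝ)
    (hint : ∀ i, Integrable (fun ω => η ω i) μ)
    (hmean : ∀ i, (∫ ω, η ω i ∂μ) = 0)
    (Xf : Matrix (Fin d) (Fin Nf) ℝ)
    (U : Matrix (Fin d) (Fin d) ℝ) (hU : Uᵀ * U = 1)
    (V : Matrix (Fin Nf) (Fin d) ℝ) (hV : Vᵀ * V = 1)
    (σ : Fin d → ℝ) (hσpos : ∀ i, 0 < σ i)
    (hSVD : Xf = U * Matrix.diagonal σ * Vᵀ)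
    (lam α : ℝ) (hlam : 0 < lam) (hα0 : 0 ≤ α) (hα1 : α ≤ 1)
    (θstar : Fin d → ℝ)
    (A : Matrix (Fin d) (Fin d) ℝ)
    (hA : A = Xf * Xfᵀ + lam • (1 : Matrix (Fin d) (Fin d) ℝ))
    (student : Ω → Fin d → ℝ)
    (hstudent : student = fun ω =>
      A⁻¹ *ᵥ (Xf *ᵥ ((1 - α) • (Xfᵀ *ᵥ θstar + η ω)
        + α • (Xfᵀ *ᵥ (A⁻¹ *ᵥ (Xf *ᵥ (Xfᵀ *ᵥ θstar + η ω))))))) :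
    (∑ j, ((∫ ω, student ω j ∂μ) - θstar j) ^ 2)
      = ∑ i, (∑ j, θstar j * U j i) ^ 2 * (lam / (σ i ^ 2 + lam)) ^ 2
          * (1 + α * σ i ^ 2 / (σ i ^ 2 + lam)) ^ 2 :=
  stmt6_general μ η hint hmean Xf U hU V hV σ hSVD lam α hlam θstar A hA student hstudent
end

section
/- Under the self-distillation setup on the same data (f_t = f) with full-rank X_f, the squared norm of the expected estimation error ‖E_η[θ̂_s(α,f,f) − θ*]‖² is nondecreasing in α on [0,1]; in particular, self-distillation with α > 0 has bias at least as large as plain ridge regression (α = 0). -/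
/-!
With `M = A⁻¹ X Xᵀ`, the noise averages out and the mean error of the student is affine in `α`:
`E θ̂_s(α) − θ* = v + α M v` with `v = M θ* − θ*`. Its squared norm is a quadratic in `α` with
nonnegative leading coefficient and linear coefficient `2 ⟨v, M v⟩`, so it is nondecreasing on
`α ≥ 0` as soon as `⟨v, M v⟩ ≥ 0`, which holds because `A⁻¹` and `X Xᵀ` are commuting positive
semidefinite matrices.
-/

open Matrix MeasureTheory

theorem monotoneOn_sum_sq_add_mul {n : Type*} [Fintype n] (v w : n → ℝ) (h : 0 ≤ v ⬝ᵥ w) :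
    MonotoneOn (fun α : ℝ => ∑ j, (v j + α * w j) ^ 2) (Set.Ici 0) := by
  have expand : ∀ α : ℝ,
      ∑ j, (v j + α * w j) ^ 2 = v ⬝ᵥ v + 2 * α * (v ⬝ᵥ w) + α ^ 2 * (w ⬝ᵥ w) := by
    intro α
    simp only [dotProduct, Finset.mul_sum, ← Finset.sum_add_distrib]
    exact Finset.sum_congr rfl fun j _ => by ring
  intro a ha b hb hab
  simp only [expand]
  have hw : 0 ≤ w ⬝ᵥ w := Finset.sum_nonneg fun j _ => mul_self_nonneg (w j)
  have hab' : 0 ≤ a + b := add_nonneg ha hb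
  nlinarith [mul_nonneg (sub_nonneg.2 hab) h, mul_nonneg (mul_nonneg (sub_nonneg.2 hab) hab') hw]

theorem Matrix.PosSemidef.dotProduct_inv_add_smul_one_mul_mulVec_nonneg {n : Type*} [Fintype n]
    [DecidableEq n] {B : Matrix n n ℝ} (hB : B.PosSemidef) {lam : ℝ} (hlam : 0 ≤ lam) (v : n → ℝ) :
    0 ≤ v ⬝ᵥ ((B + lam • 1)⁻¹ * B) *ᵥ v := by
  set A := B + lam • (1 : Matrix n n ℝ)
  by_cases hA : IsUnit A.det
  · have hsymm : ∀ S : Matrix n n ℝ, Sᵀ = S → ∀ x y, x ⬝ᵥ S *ᵥ y = (S *ᵥ x) ⬝ᵥ y := by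
      intro S hS x y
      rw [dotProduct_mulVec, ← vecMul_transpose, hS]
    have hBt : Bᵀ = B := hB.isHermitian
    have hAt : Aᵀ = A := by simp [A, transpose_add, hBt]
    -- In terms of `p = A⁻¹ v` the form becomes `pᵀ B A p = ‖B p‖² + lam pᵀ B p`.
    obtain ⟨p, rfl⟩ : ∃ p, v = A *ᵥ p :=
      ⟨A⁻¹ *ᵥ v, by rw [mulVec_mulVec, mul_nonsing_inv A hA, one_mulVec]⟩
    calc (0 : ℝ) ≤ (B *ᵥ p) ⬝ᵥ (B *ᵥ p) + lam * (p ⬝ᵥ B *ᵥ p) :=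
          add_nonneg (Finset.sum_nonneg fun i _ => mul_self_nonneg _)
            (mul_nonneg hlam (hB.dotProduct_mulVec_nonneg p))
      _ = p ⬝ᵥ B *ᵥ (A *ᵥ p) := by
          rw [show A *ᵥ p = B *ᵥ p + lam • p by simp [A, add_mulVec, smul_mulVec], mulVec_add,
            mulVec_smul, dotProduct_add, dotProduct_smul, hsymm B hBt p (B *ᵥ p), smul_eq_mul]
      _ = (A *ᵥ p) ⬝ᵥ (A⁻¹ * B) *ᵥ (A *ᵥ p) := by
          rw [← hsymm A hAt]
          simp only [mulVec_mulVec, ← Matrix.mul_assoc, mul_nonsing_inv A hA, Matrix.one_mul]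
  · -- `A⁻¹` is the junk value `0` here.
    simp [Matrix.nonsing_inv_apply_not_isUnit A hA]

theorem integral_mulVec_add_apply {Ω m n : Type*} [Fintype n] [MeasurableSpace Ω]
    (μ : Measure Ω) [IsProbabilityMeasure μ] {η : Ω → n → ℝ}
    (hint : ∀ i, Integrable (fun ω => η ω i) μ) (hmean : ∀ i, ∫ ω, η ω i ∂μ = 0)
    (R : Matrix m n ℝ) (b : n → ℝ) (j : m) :
    ∫ ω, (R *ᵥ (b + η ω)) j ∂μ = (R *ᵥ b) j := by
  have hterm : ∀ i, Integrable (fun ω => R j i * η ω i) μ := fun i => (hint i).const_mul _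
  have hnoise : Integrable (fun ω => (R *ᵥ η ω) j) μ := integrable_finsetSum _ fun i _ => hterm i
  have hnoise_mean : ∫ ω, (R *ᵥ η ω) j ∂μ = 0 := by
    simp only [mulVec, dotProduct]
    rw [integral_finsetSum _ fun i _ => hterm i]
    simp [integral_const_mul, hmean]
  simp only [mulVec_add, Pi.add_apply]
  rw [integral_add (integrable_const _) hnoise, integral_const, hnoise_mean]
  simp

theorem stmt7_general {d Nf : ℕ}
    {Ω : Type*} [MeasurableSpace Ω] (μ : Measure Ω) [IsProbabilityMeasure μ]
    (η : Ω → Fin Nf → ℝ)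
    (hint : ∀ i, Integrable (fun ω => η ω i) μ)
    (hmean : ∀ i, (∫ ω, η ω i ∂μ) = 0)
    (Xf : Matrix (Fin d) (Fin Nf) ℝ)
    (lam : ℝ) (hlam : 0 < lam)
    (θstar : Fin d → ℝ)
    (A : Matrix (Fin d) (Fin d) ℝ)
    (hA : A = Xf * Xfᵀ + lam • (1 : Matrix (Fin d) (Fin d) ℝ))
    (student : ℝ → Ω → Fin d → ℝ)
    (hstudent : student = fun α ω =>
      A⁻¹ *ᵥ (Xf *ᵥ ((1 - α) • (Xfᵀ *ᵥ θstar + η ω)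
        + α • (Xfᵀ *ᵥ (A⁻¹ *ᵥ (Xf *ᵥ (Xfᵀ *ᵥ θstar + η ω))))))) :
    MonotoneOn (fun α => ∑ j, ((∫ ω, student α ω j ∂μ) - θstar j) ^ 2)
      (Set.Icc (0 : ℝ) 1) := by
  set M := A⁻¹ * (Xf * Xfᵀ)
  set v := M *ᵥ θstar - θstar
  have hlinear : ∀ α ω, student α ω =
      (A⁻¹ * Xf * ((1 - α) • 1 + α • (Xfᵀ * A⁻¹ * Xf))) *ᵥ (Xfᵀ *ᵥ θstar + η ω) := by
    intro α ω
    simp only [hstudent, Matrix.mul_add, Matrix.mul_smul, Matrix.mul_one, add_mulVec,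
      smul_mulVec, ← mulVec_mulVec, mulVec_add, mulVec_smul]
    module
  have hnoiseless : ∀ α : ℝ,
      (A⁻¹ * Xf * ((1 - α) • 1 + α • (Xfᵀ * A⁻¹ * Xf))) *ᵥ (Xfᵀ *ᵥ θstar)
        = (1 - α) • (M *ᵥ θstar) + α • (M *ᵥ (M *ᵥ θstar)) := by
    intro α
    simp only [M, Matrix.mul_add, Matrix.mul_smul, Matrix.mul_one, Matrix.add_mul,
      Matrix.smul_mul, add_mulVec, smul_mulVec, mulVec_mulVec, Matrix.mul_assoc]
  have hbias : ∀ α j, (∫ ω, student α ω j ∂μ) - θstar j = v j + α * (M *ᵥ v) j := by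
    intro α j
    simp only [hlinear, integral_mulVec_add_apply μ hint hmean, hnoiseless, v, mulVec_sub]
    simp only [Pi.add_apply, Pi.sub_apply, Pi.smul_apply, smul_eq_mul]
    ring
  have hcross : 0 ≤ v ⬝ᵥ M *ᵥ v := by
    have hB : (Xf * Xfᵀ).PosSemidef := by
      simpa using posSemidef_self_mul_conjTranspose Xf
    have := hB.dotProduct_inv_add_smul_one_mul_mulVec_nonneg hlam.le v
    rwa [← hA] at this
  simp only [hbias]
  exact (monotoneOn_sum_sq_add_mul v (M *ᵥ v) hcross).mono Set.Icc_subset_Ici_self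

/-- Under self-distillation on the same data (`f_t = f`) with full-rank `X_f`, the
squared norm of the expected estimation error `‖E_η[θ̂_s(α,f,f) − θ*]‖²` is
nondecreasing in `α` on `[0,1]`; in particular self-distillation with `α > 0` has
bias at least as large as plain ridge regression (`α = 0`). -/
theorem stmt7 {d Nf : ℕ} (hd : d ≤ Nf)
    {Ω : Type*} [MeasurableSpace Ω] (μ : Measure Ω) [IsProbabilityMeasure μ]
    (η : Ω → Fin Nf → ℝ)
    (hint : ∀ i, Integrable (fun ω => η ω i) μ)
    (hmean : ∀ i, (∫ ω, η ω i ∂μ) = 0)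
    (Xf : Matrix (Fin d) (Fin Nf) ℝ) (hrank : Xf.rank = d)
    (lam : ℝ) (hlam : 0 < lam)
    (θstar : Fin d → ℝ)
    (A : Matrix (Fin d) (Fin d) ℝ)
    (hA : A = Xf * Xfᵀ + lam • (1 : Matrix (Fin d) (Fin d) ℝ))
    (student : ℝ → Ω → Fin d → ℝ)
    (hstudent : student = fun α ω =>
      A⁻¹ *ᵥ (Xf *ᵥ ((1 - α) • (Xfᵀ *ᵥ θstar + η ω)
        + α • (Xfᵀ *ᵥ (A⁻¹ *ᵥ (Xf *ᵥ (Xfᵀ *ᵥ θstar + η ω))))))) :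
    MonotoneOn (fun α => ∑ j, ((∫ ω, student α ω j ∂μ) - θstar j) ^ 2)
      (Set.Icc (0 : ℝ) 1) :=
  stmt7_general μ η hint hmean Xf lam hlam θstar A hA student hstudent
end
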